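/- arXiv:2603.05624 — 3 statements merged into one kernel-verified Lean document; each statement's English description precedes it below -/
import Mathlib

section
/- Let E be a separable Banach space, P and P' probability measures on a measurable space (Ω,𝓕), and X : Ω → E a Borel measurable map with 𝔼_P[‖X‖²] < ∞ and 𝔼_{P'}[‖X‖²] < ∞. Then for every R > 0, 𝒲₁( P∘X^{-1}, P'∘X^{-1} ) ≤ 2R·‖P − P'‖_TV + R^{-1}·( 𝔼_P[‖X‖²] + 𝔼_{P'}[‖X‖²] ). -/
/-!
Hahn decomposition writes `P∘X⁻¹ = m + a` and `P'∘X⁻¹ = m + b` with `a(E) = b(E) ≤ ‖P − P'‖_TV`.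
The coupling that leaves the common part `m` on the diagonal and couples `a` with `b`
independently (normalised by `a(E)⁻¹`) costs at most `∫ ‖x‖ da + ∫ ‖x‖ db`, and the truncation
`‖x‖ ≤ R + ‖x‖² / R` bounds each of these by `R · a(E)` plus a second moment divided by `R`.
-/

open MeasureTheory Filter Topology

noncomputable section

namespace PaperFormal

/-- `π` is a coupling of `μ` and `ν`. -/
def IsCoupling {S : Type*} [MeasurableSpace S] (μ ν : Measure S) (π : Measure (S × S)) : Prop :=
  π.map Prod.fst = μ ∧ π.map Prod.snd = ν

/-- Optimal transport cost associated with the cost function `c`.  For `c = edist` this is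
the Wasserstein-1 distance `𝒲₁`. -/
def transportCost {S : Type*} [MeasurableSpace S] (c : S → S → ENNReal)
    (μ ν : Measure S) : ENNReal :=
  ⨅ π ∈ {π : Measure (S × S) | IsCoupling μ ν π}, ∫⁻ p, c p.1 p.2 ∂π

/-- The Wasserstein-1 distance `𝒲₁` on measures on an (extended pseudo-)metric space. -/
def W1 {S : Type*} [MeasurableSpace S] [PseudoEMetricSpace S] (μ ν : Measure S) : ENNReal :=
  transportCost (fun x y => edist x y) μ ν

/-- The set `𝒫₁`: Borel probability measures with a finite first moment, the first moment
being computed with respect to the cost function `c` and the base point `x0`. -/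
def P1 {S : Type*} [MeasurableSpace S] (c : S → S → ENNReal) (x0 : S) : Set (Measure S) :=
  {μ | IsProbabilityMeasure μ ∧ ∫⁻ x, c x0 x ∂μ < ⊤}

/-- The total variation distance `‖P − Q‖_TV = sup_{A measurable} |P(A) − Q(A)|`. -/
def tvDist {Ω : Type*} [MeasurableSpace Ω] (P Q : Measure Ω) : ENNReal :=
  ⨆ A ∈ {A : Set Ω | MeasurableSet A}, max (P A - Q A) (Q A - P A)

/-- The sum cost on a product of two metric spaces, corresponding to the norm
`‖(x,z)‖ = ‖x‖ + |z|` used in the paper. -/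
def sumCost {α β : Type*} [PseudoEMetricSpace α] [PseudoEMetricSpace β] :
    (α × β) → (α × β) → ENNReal :=
  fun p q => edist p.1 q.1 + edist p.2 q.2

/-- Relative sequential compactness of a set `𝒬` of measures inside a set `target`
(typically `𝒫₁`), with respect to the transport-cost (Wasserstein) topology. -/
def RelCptW {S : Type*} [MeasurableSpace S] (c : S → S → ENNReal)
    (target 𝒬 : Set (Measure S)) : Prop :=
  ∀ f : ℕ → Measure S, (∀ n, f n ∈ 𝒬) →
    ∃ μ ∈ target, ∃ σ : ℕ → ℕ, StrictMono σ ∧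
      Tendsto (fun n => transportCost c (f (σ n)) μ) atTop (𝓝 0)

/-- Sequential compactness of a set of measures w.r.t. the transport-cost topology. -/
def CptW {S : Type*} [MeasurableSpace S] (c : S → S → ENNReal) (𝒬 : Set (Measure S)) : Prop :=
  RelCptW c 𝒬 𝒬

/-- The Dirac-type Young measure `δ_{q_t}(dq) dt` on `[0,T] × 𝒫(S)` associated with a
measure-flow `t ↦ q_t`. -/
def diracYoung {S : Type*} [MeasurableSpace S] (T : ℝ) (q : ℝ → Measure S) :
    Measure (ℝ × Measure S) :=
  (volume.restrict (Set.Icc (0 : ℝ) T)).map (fun t => (t, q t))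

/-- `ν` is an integrable Young measure on `[0,T] × 𝒫₁(S)`: its first marginal is Lebesgue
measure on `[0,T]`, it is carried by `𝒫₁(S)`, and it integrates the first-moment map. -/
def IsIntegrableYoung {S : Type*} [MeasurableSpace S] (T : ℝ) (c : S → S → ENNReal) (x0 : S)
    (ν : Measure (ℝ × Measure S)) : Prop :=
  ν.map Prod.fst = volume.restrict (Set.Icc (0 : ℝ) T) ∧
  (∀ᵐ p ∂ν, p.2 ∈ P1 c x0) ∧
  ∫⁻ p, (∫⁻ x, c x0 x ∂p.2) ∂ν < ⊤

/-- Convergence in the stable topology `𝒮₁(𝒫₁(S))` of integrable Young measures: the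
integrals against all test functions `1_A(t) φ(q)`, with `A ⊆ [0,T]` Borel and
`φ` Lipschitz w.r.t. the Wasserstein-1 distance, converge. -/
def StableTendsto {S : Type*} [MeasurableSpace S] (T : ℝ) (c : S → S → ENNReal) (x0 : S)
    (νs : ℕ → Measure (ℝ × Measure S)) (ν : Measure (ℝ × Measure S)) : Prop :=
  ∀ A : Set ℝ, MeasurableSet A → A ⊆ Set.Icc 0 T →
    ∀ (φ : Measure S → ℝ) (L : ℝ),
      (∀ μ₁ μ₂, μ₁ ∈ P1 c x0 → μ₂ ∈ P1 c x0 →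
        |φ μ₁ - φ μ₂| ≤ L * (transportCost c μ₁ μ₂).toReal) →
      Tendsto (fun n => ∫ p, A.indicator (fun _ => (1 : ℝ)) p.1 * φ p.2 ∂(νs n)) atTop
        (𝓝 (∫ p, A.indicator (fun _ => (1 : ℝ)) p.1 * φ p.2 ∂ν))

/-- Relative sequential compactness of a family of integrable Young measures in the
stable topology `𝒮₁(𝒫₁(S))`. -/
def StableRelCpt {S : Type*} [MeasurableSpace S] (T : ℝ) (c : S → S → ENNReal) (x0 : S)
    (𝔉 : Set (Measure (ℝ × Measure S))) : Prop :=
  ∀ f : ℕ → Measure (ℝ × Measure S), (∀ n, f n ∈ 𝔉) →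
    ∃ ν, IsIntegrableYoung T c x0 ν ∧
      ∃ σ : ℕ → ℕ, StrictMono σ ∧ StableTendsto T c x0 (fun n => f (σ n)) ν

end PaperFormal

namespace PaperFormal

open Set ENNReal

lemma le_add_inv_mul_sq (t R : ℝ≥0∞) : t ≤ R + R⁻¹ * t ^ 2 := by
  rcases le_or_gt t R with htR | htR
  · exact le_add_right htR
  refine le_add_left ?_
  rcases eq_or_ne R 0 with rfl | hR
  · simp [htR.ne']
  calc t = R⁻¹ * R * t := by rw [ENNReal.inv_mul_cancel hR htR.ne_top, one_mul]
    _ ≤ R⁻¹ * t * t := by gcongr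
    _ = R⁻¹ * t ^ 2 := by ring

section Measures

variable {S : Type*} [MeasurableSpace S]

lemma lintegral_le_mul_add_inv_mul_lintegral_sq {a μ : Measure S} (haμ : a ≤ μ)
    {f : S → ℝ≥0∞} (hf : Measurable f) (R : ℝ≥0∞) :
    ∫⁻ x, f x ∂a ≤ R * a univ + R⁻¹ * ∫⁻ x, f x ^ 2 ∂μ :=
  calc ∫⁻ x, f x ∂a ≤ ∫⁻ x, (R + R⁻¹ * f x ^ 2) ∂a :=
        lintegral_mono fun x => le_add_inv_mul_sq _ _
    _ = R * a univ + R⁻¹ * ∫⁻ x, f x ^ 2 ∂a := by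
      rw [lintegral_add_left measurable_const, lintegral_const,
        lintegral_const_mul _ (hf.pow_const 2), mul_comm]
    _ ≤ R * a univ + R⁻¹ * ∫⁻ x, f x ^ 2 ∂μ := by gcongr

lemma le_tvDist (μ ν : Measure S) {s : Set S} (hs : MeasurableSet s) :
    μ s - ν s ≤ tvDist μ ν :=
  (le_max_left _ _).trans <|
    le_biSup (fun A => max (μ A - ν A) (ν A - μ A)) (show s ∈ {A | MeasurableSet A} from hs)

lemma tvDist_map_le {T : Type*} [MeasurableSpace T] (μ ν : Measure S) {X : S → T}
    (hX : Measurable X) : tvDist (μ.map X) (ν.map X) ≤ tvDist μ ν :=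
  iSup₂_le fun A hA => by
    rw [Measure.map_apply hX hA, Measure.map_apply hX hA]
    exact le_biSup (fun B => max (μ B - ν B) (ν B - μ B))
      (show X ⁻¹' A ∈ {B | MeasurableSet B} from hX hA)

lemma restrict_le_restrict_of_forall_subset {μ ν : Measure S} {s : Set S} (hs : MeasurableSet s)
    (h : ∀ t, MeasurableSet t → t ⊆ s → ν t ≤ μ t) : ν.restrict s ≤ μ.restrict s :=
  Measure.le_iff.2 fun t ht => by
    simpa only [Measure.restrict_apply ht] using h _ (ht.inter hs) inter_subset_right

lemma exists_eq_add_eq_add_measure_univ_le_tvDist (μ ν : Measure S) [IsFiniteMeasure μ]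
    [IsFiniteMeasure ν] (h : μ univ = ν univ) :
    ∃ m a b : Measure S, μ = m + a ∧ ν = m + b ∧ a ≤ μ ∧ b ≤ ν ∧ a univ = b univ ∧
      a univ ≤ tvDist μ ν := by
  obtain ⟨s, hs, hνμ, hμν⟩ := hahn_decomposition μ ν
  have h₁ := restrict_le_restrict_of_forall_subset hs hνμ
  have h₂ := restrict_le_restrict_of_forall_subset hs.compl hμν
  set m := ν.restrict s + μ.restrict sᶜ
  have hμ : μ = m + (μ.restrict s - ν.restrict s) := by
    rw [add_right_comm, add_comm (ν.restrict s), Measure.sub_add_cancel_of_le h₁,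
      Measure.restrict_add_restrict_compl hs]
  have hν : ν = m + (ν.restrict sᶜ - μ.restrict sᶜ) := by
    rw [add_assoc, add_comm (μ.restrict sᶜ), Measure.sub_add_cancel_of_le h₂,
      Measure.restrict_add_restrict_compl hs]
  refine ⟨m, _, _, hμ, hν, Measure.sub_le.trans Measure.restrict_le_self,
    Measure.sub_le.trans Measure.restrict_le_self, ?_, ?_⟩
  · rw [← ENNReal.add_right_inj (measure_ne_top m univ), ← Measure.add_apply,
      ← Measure.add_apply, ← hμ, ← hν, h]
  · rw [Measure.sub_apply MeasurableSet.univ h₁, Measure.restrict_apply_univ,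
      Measure.restrict_apply_univ]
    exact le_tvDist μ ν hs

def overlapCoupling (m a b : Measure S) : Measure (S × S) :=
  m.map (fun x => (x, x)) + (a univ)⁻¹ • a.prod b

lemma inv_measure_univ_smul_smul (a : Measure S) [IsFiniteMeasure a] :
    (a univ)⁻¹ • a univ • a = a := by
  rcases eq_or_ne a 0 with rfl | ha
  · simp
  · rw [smul_smul, ENNReal.inv_mul_cancel (by simpa using ha) (measure_ne_top a univ), one_smul]

lemma isCoupling_overlapCoupling (m a b : Measure S) [IsFiniteMeasure a] [IsFiniteMeasure b]
    (hab : a univ = b univ) : IsCoupling (m + a) (m + b) (overlapCoupling m a b) := by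
  have hdiag : Measurable fun x : S => (x, x) := measurable_id.prodMk measurable_id
  constructor
  · rw [overlapCoupling, Measure.map_add _ _ measurable_fst, Measure.map_smul,
      Measure.map_map measurable_fst hdiag, Measure.map_fst_prod, ← hab,
      inv_measure_univ_smul_smul, Function.comp_def, Measure.map_id']
  · rw [overlapCoupling, Measure.map_add _ _ measurable_snd, Measure.map_smul,
      Measure.map_map measurable_snd hdiag, Measure.map_snd_prod, hab,
      inv_measure_univ_smul_smul, Function.comp_def, Measure.map_id']

end Measures

section Metric

variable {S : Type*} [MeasurableSpace S] [PseudoEMetricSpace S]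

lemma W1_le_lintegral_edist {μ ν : Measure S} {π : Measure (S × S)} (hπ : IsCoupling μ ν π) :
    W1 μ ν ≤ ∫⁻ p, edist p.1 p.2 ∂π :=
  iInf₂_le π hπ

variable [OpensMeasurableSpace S]

lemma lintegral_edist_overlapCoupling_le (x₀ : S) (m a b : Measure S) [SFinite a] [SFinite b]
    (hab : a univ = b univ) :
    ∫⁻ p, edist p.1 p.2 ∂overlapCoupling m a b ≤ ∫⁻ x, edist x₀ x ∂a + ∫⁻ x, edist x₀ x ∂b := by
  have hdiag : ∫⁻ p, edist p.1 p.2 ∂m.map (fun x => (x, x)) = 0 :=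
    nonpos_iff_eq_zero.1 <| (lintegral_map_le _ _).trans_eq (by simp)
  have hprod : ∫⁻ p, edist p.1 p.2 ∂a.prod b ≤
      b univ * ∫⁻ x, edist x₀ x ∂a + a univ * ∫⁻ x, edist x₀ x ∂b :=
    calc ∫⁻ p, edist p.1 p.2 ∂a.prod b
        ≤ ∫⁻ p, (edist x₀ p.1 + edist x₀ p.2) ∂a.prod b :=
          lintegral_mono fun p => edist_triangle_left _ _ _
      _ = ∫⁻ x, edist x₀ x ∂(a.prod b).map Prod.fst +
            ∫⁻ y, edist x₀ y ∂(a.prod b).map Prod.snd := by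
          rw [lintegral_add_left (by fun_prop),
            lintegral_map measurable_edist_right measurable_fst,
            lintegral_map measurable_edist_right measurable_snd]
      _ = b univ * ∫⁻ x, edist x₀ x ∂a + a univ * ∫⁻ x, edist x₀ x ∂b := by
          simp only [Measure.map_fst_prod, Measure.map_snd_prod, lintegral_smul_measure,
            smul_eq_mul]
  calc ∫⁻ p, edist p.1 p.2 ∂overlapCoupling m a b
      = (a univ)⁻¹ * ∫⁻ p, edist p.1 p.2 ∂a.prod b := by
        rw [overlapCoupling, lintegral_add_measure, hdiag, zero_add, lintegral_smul_measure,
          smul_eq_mul]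
    _ ≤ (a univ)⁻¹ * a univ * (∫⁻ x, edist x₀ x ∂a + ∫⁻ x, edist x₀ x ∂b) := by
        rw [mul_assoc, mul_add]
        gcongr
        rwa [← hab] at hprod
    _ ≤ ∫⁻ x, edist x₀ x ∂a + ∫⁻ x, edist x₀ x ∂b :=
        mul_le_of_le_one_left zero_le (ENNReal.inv_mul_le_one _)

theorem W1_le_two_mul_tvDist_add (x₀ : S) (μ ν : Measure S) [IsFiniteMeasure μ]
    [IsFiniteMeasure ν] (h : μ univ = ν univ) (R : ℝ≥0∞) :
    W1 μ ν ≤ 2 * R * tvDist μ ν +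
      R⁻¹ * (∫⁻ x, edist x₀ x ^ 2 ∂μ + ∫⁻ x, edist x₀ x ^ 2 ∂ν) := by
  obtain ⟨m, a, b, hμ, hν, haμ, hbν, hab, htv⟩ :=
    exists_eq_add_eq_add_measure_univ_le_tvDist μ ν h
  have := isFiniteMeasure_of_le μ haμ
  have := isFiniteMeasure_of_le ν hbν
  calc W1 μ ν ≤ ∫⁻ p, edist p.1 p.2 ∂overlapCoupling m a b :=
        W1_le_lintegral_edist (hμ ▸ hν ▸ isCoupling_overlapCoupling m a b hab)
    _ ≤ ∫⁻ x, edist x₀ x ∂a + ∫⁻ x, edist x₀ x ∂b :=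
        lintegral_edist_overlapCoupling_le x₀ m a b hab
    _ ≤ (R * a univ + R⁻¹ * ∫⁻ x, edist x₀ x ^ 2 ∂μ) +
          (R * b univ + R⁻¹ * ∫⁻ x, edist x₀ x ^ 2 ∂ν) :=
        add_le_add (lintegral_le_mul_add_inv_mul_lintegral_sq haμ measurable_edist_right R)
          (lintegral_le_mul_add_inv_mul_lintegral_sq hbν measurable_edist_right R)
    _ = 2 * R * a univ + R⁻¹ * (∫⁻ x, edist x₀ x ^ 2 ∂μ + ∫⁻ x, edist x₀ x ^ 2 ∂ν) := by
        rw [← hab]; ring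
    _ ≤ 2 * R * tvDist μ ν + R⁻¹ * (∫⁻ x, edist x₀ x ^ 2 ∂μ + ∫⁻ x, edist x₀ x ^ 2 ∂ν) := by
        gcongr

end Metric

end PaperFormal

open PaperFormal in
theorem statement1_general
    {Ω : Type*} [MeasurableSpace Ω]
    {E : Type*} [NormedAddCommGroup E] [MeasurableSpace E] [BorelSpace E]
    (P P' : Measure Ω) [IsProbabilityMeasure P] [IsProbabilityMeasure P']
    (X : Ω → E) (hX : Measurable X) :
    ∀ R : ℝ, 0 < R →
      W1 (P.map X) (P'.map X) ≤
        2 * ENNReal.ofReal R * tvDist P P' +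
          (ENNReal.ofReal R)⁻¹ *
            (∫⁻ ω, (‖X ω‖₊ : ENNReal) ^ 2 ∂P + ∫⁻ ω, (‖X ω‖₊ : ENNReal) ^ 2 ∂P') := by
  intro R _
  have hmass : (P.map X) Set.univ = (P'.map X) Set.univ := by
    simp [Measure.map_apply hX MeasurableSet.univ]
  have hmoment (Q : Measure Ω) :
      ∫⁻ x, edist 0 x ^ 2 ∂Q.map X = ∫⁻ ω, (‖X ω‖₊ : ENNReal) ^ 2 ∂Q := by
    simp only [edist_zero_left]
    exact lintegral_map (measurable_enorm.pow_const 2) hX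
  calc W1 (P.map X) (P'.map X)
      ≤ 2 * ENNReal.ofReal R * tvDist (P.map X) (P'.map X) + (ENNReal.ofReal R)⁻¹ *
          (∫⁻ x, edist 0 x ^ 2 ∂P.map X + ∫⁻ x, edist 0 x ^ 2 ∂P'.map X) :=
        W1_le_two_mul_tvDist_add 0 _ _ hmass _
    _ ≤ _ := by
        rw [hmoment, hmoment]
        gcongr
        exact tvDist_map_le P P' hX

open PaperFormal in
/-- truncation estimate inside Proposition 3.1.  For probability measures
`P, P'` and a random variable `X` with finite second moments under both, for every `R > 0`:
`𝒲₁(P∘X⁻¹, P'∘X⁻¹) ≤ 2R‖P−P'‖_TV + R⁻¹(𝔼_P[‖X‖²] + 𝔼_{P'}[‖X‖²])`. -/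
theorem statement1
    {Ω : Type*} [MeasurableSpace Ω]
    {E : Type*} [NormedAddCommGroup E] [NormedSpace ℝ E] [CompleteSpace E]
    [TopologicalSpace.SeparableSpace E] [MeasurableSpace E] [BorelSpace E]
    (P P' : Measure Ω) [IsProbabilityMeasure P] [IsProbabilityMeasure P']
    (X : Ω → E) (hX : Measurable X)
    (hP : ∫⁻ ω, (‖X ω‖₊ : ENNReal) ^ 2 ∂P < ⊤)
    (hP' : ∫⁻ ω, (‖X ω‖₊ : ENNReal) ^ 2 ∂P' < ⊤) :
    ∀ R : ℝ, 0 < R →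
      W1 (P.map X) (P'.map X) ≤
        2 * ENNReal.ofReal R * tvDist P P' +
          (ENNReal.ofReal R)⁻¹ *
            (∫⁻ ω, (‖X ω‖₊ : ENNReal) ^ 2 ∂P + ∫⁻ ω, (‖X ω‖₊ : ENNReal) ^ 2 ∂P') :=
  statement1_general P P' X hX
end
end

section
/- Let E be a separable Banach space, T > 0, P and P' probability measures on (Ω,𝓕), and X : [0,T]×Ω → E a jointly measurable process with ‖X‖_{ℍ²(E;P)} < ∞ and ‖X‖_{ℍ²(E;P')} < ∞. Then ∫₀ᵀ 𝒲₁( P∘(X_t)^{-1}, P'∘(X_t)^{-1} ) dt ≤ ( 2T + ‖X‖²_{ℍ²(E;P)} + ‖X‖²_{ℍ²(E;P')} ) · ‖P − P'‖_TV^{1/2}. -/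
/-!
Along a Hahn decomposition of `P - P'` write `P = λ + a` and `P' = λ + b`, where
`a(Ω) = b(Ω) ≤ ‖P - P'‖_TV`. Keeping the common part `λ` on the diagonal and coupling `a` with `b`
independently shows `𝒲₁(P∘X_t⁻¹, P'∘X_t⁻¹) ≤ ∫ ‖X_t‖ d(a + b)` for every `t`. The truncation
`‖x‖ ≤ R + R⁻¹‖x‖²` and Tonelli then bound the time integral by
`2TR·a(Ω) + R⁻¹(‖X‖²_{ℍ²(P)} + ‖X‖²_{ℍ²(P')})`, and `R = ‖P - P'‖_TV^{-1/2}` gives the claim.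
-/

open MeasureTheory Filter Topology

noncomputable section

open Set ENNReal

lemma ENNReal.le_add_inv_mul_sq (x R : ℝ≥0∞) : x ≤ R + R⁻¹ * x ^ 2 := by
  rcases eq_or_ne R ⊤ with rfl | hR
  · simp
  rcases le_total x R with hxR | hRx
  · exact le_add_right hxR
  refine le_add_left ?_
  rcases eq_or_ne R 0 with rfl | hR0
  · rcases eq_or_ne x 0 with rfl | hx <;> simp_all
  calc x = R⁻¹ * R * x := by rw [ENNReal.inv_mul_cancel hR0 hR, one_mul]
    _ ≤ R⁻¹ * x * x := by gcongr
    _ = R⁻¹ * x ^ 2 := by ring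

lemma lintegral_le_mul_measure_univ_add_inv_mul_lintegral_sq {α : Type*} [MeasurableSpace α]
    {μ : Measure α} {f : α → ℝ≥0∞} (hf : AEMeasurable f μ) (R : ℝ≥0∞) :
    ∫⁻ x, f x ∂μ ≤ R * μ univ + R⁻¹ * ∫⁻ x, f x ^ 2 ∂μ :=
  calc ∫⁻ x, f x ∂μ ≤ ∫⁻ x, (R + R⁻¹ * f x ^ 2) ∂μ :=
        lintegral_mono fun x => ENNReal.le_add_inv_mul_sq (f x) R
    _ = R * μ univ + R⁻¹ * ∫⁻ x, f x ^ 2 ∂μ := by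
        rw [lintegral_add_left measurable_const, lintegral_const,
          lintegral_const_mul'' _ (hf.pow_const 2)]

lemma lintegral_lintegral_le_mul_add_inv_mul_lintegral_lintegral_sq {α β : Type*}
    [MeasurableSpace α] [MeasurableSpace β] {μ : Measure α} {ν : Measure β} [SFinite μ]
    [SFinite ν] {f : α → β → ℝ≥0∞} (hf : Measurable fun p : α × β => f p.1 p.2) (R : ℝ≥0∞) :
    ∫⁻ x, ∫⁻ y, f x y ∂ν ∂μ ≤ R * (μ univ * ν univ) + R⁻¹ * ∫⁻ y, ∫⁻ x, f x y ^ 2 ∂μ ∂ν := by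
  rw [← lintegral_prod _ hf.aemeasurable, ← lintegral_prod_symm' _ (hf.pow_const 2),
    ← Measure.prod_prod, univ_prod_univ]
  exact lintegral_le_mul_measure_univ_add_inv_mul_lintegral_sq hf.aemeasurable R

lemma inv_measure_univ_mul_smul_self {Ω : Type*} [MeasurableSpace Ω] (μ : Measure Ω)
    [IsFiniteMeasure μ] :
    ((μ univ)⁻¹ * μ univ) • μ = μ := by
  rcases eq_or_ne (μ univ) 0 with h | h
  · rw [Measure.measure_univ_eq_zero.1 h, smul_zero]
  · rw [ENNReal.inv_mul_cancel h (measure_ne_top μ univ), one_smul]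

namespace PaperFormal

section Coupling

variable {Ω : Type*} [MeasurableSpace Ω] {μ ν μ' ν' : Measure Ω} {π π' : Measure (Ω × Ω)}

lemma IsCoupling.add (h : IsCoupling μ ν π) (h' : IsCoupling μ' ν' π') :
    IsCoupling (μ + μ') (ν + ν') (π + π') :=
  ⟨by rw [Measure.map_add _ _ measurable_fst, h.1, h'.1],
    by rw [Measure.map_add _ _ measurable_snd, h.2, h'.2]⟩

lemma IsCoupling.map {S : Type*} [MeasurableSpace S] (h : IsCoupling μ ν π) {Y : Ω → S}
    (hY : Measurable Y) : IsCoupling (μ.map Y) (ν.map Y) (π.map (Prod.map Y Y)) := by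
  constructor
  · rw [Measure.map_map measurable_fst (hY.prodMap hY), ← h.1,
      Measure.map_map hY measurable_fst]
    rfl
  · rw [Measure.map_map measurable_snd (hY.prodMap hY), ← h.2,
      Measure.map_map hY measurable_snd]
    rfl

lemma IsCoupling.lintegral_add (h : IsCoupling μ ν π) {f g : Ω → ℝ≥0∞} (hf : Measurable f)
    (hg : Measurable g) : ∫⁻ p, (f p.1 + g p.2) ∂π = ∫⁻ x, f x ∂μ + ∫⁻ x, g x ∂ν := by
  rw [lintegral_add_left (f := fun p : Ω × Ω => f p.1) (by fun_prop), ← h.1, ← h.2,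
    lintegral_map hf measurable_fst, lintegral_map hg measurable_snd]

lemma isCoupling_map_diag (μ : Measure Ω) : IsCoupling μ μ (μ.map fun ω => (ω, ω)) :=
  ⟨by rw [Measure.map_map measurable_fst (by fun_prop)]; exact Measure.map_id,
    by rw [Measure.map_map measurable_snd (by fun_prop)]; exact Measure.map_id⟩

lemma isCoupling_smul_prod [IsFiniteMeasure μ] [IsFiniteMeasure ν] (h : μ univ = ν univ) :
    IsCoupling μ ν ((μ univ)⁻¹ • μ.prod ν) := by
  constructor
  · rw [Measure.map_smul, Measure.map_fst_prod, smul_smul, ← h, inv_measure_univ_mul_smul_self]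
  · rw [Measure.map_smul, Measure.map_snd_prod, smul_smul, h, inv_measure_univ_mul_smul_self]

end Coupling

variable {Ω : Type*} [MeasurableSpace Ω]

lemma W1_map_le_lintegral_edist {S : Type*} [MeasurableSpace S] [PseudoEMetricSpace S]
    {μ ν : Measure Ω} {π : Measure (Ω × Ω)} (h : IsCoupling μ ν π) {Y : Ω → S}
    (hY : Measurable Y) : W1 (μ.map Y) (ν.map Y) ≤ ∫⁻ p, edist (Y p.1) (Y p.2) ∂π :=
  (iInf₂_le _ (h.map hY)).trans (lintegral_map_le _ _)

lemma W1_map_add_le {E : Type*} [NormedAddCommGroup E] [MeasurableSpace E]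
    [OpensMeasurableSpace E] (lam : Measure Ω) {a b : Measure Ω} [IsFiniteMeasure a]
    [IsFiniteMeasure b] (hab : a univ = b univ) {Y : Ω → E} (hY : Measurable Y) :
    W1 ((lam + a).map Y) ((lam + b).map Y) ≤ ∫⁻ ω, ‖Y ω‖ₑ ∂a + ∫⁻ ω, ‖Y ω‖ₑ ∂b := by
  have hcoupling := (isCoupling_map_diag lam).add (isCoupling_smul_prod hab)
  calc W1 ((lam + a).map Y) ((lam + b).map Y)
      ≤ ∫⁻ p, edist (Y p.1) (Y p.2) ∂(lam.map fun ω => (ω, ω)) +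
          ∫⁻ p, edist (Y p.1) (Y p.2) ∂((a univ)⁻¹ • a.prod b) := by
        rw [← lintegral_add_measure]
        exact W1_map_le_lintegral_edist hcoupling hY
    _ ≤ 0 + ∫⁻ p, (‖Y p.1‖ₑ + ‖Y p.2‖ₑ) ∂((a univ)⁻¹ • a.prod b) := by
        gcongr
        · simpa using lintegral_map_le (fun p : Ω × Ω => edist (Y p.1) (Y p.2)) (fun ω => (ω, ω))
        · rw [edist_eq_enorm_sub]
          exact enorm_sub_le
    _ = ∫⁻ ω, ‖Y ω‖ₑ ∂a + ∫⁻ ω, ‖Y ω‖ₑ ∂b := by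
        rw [zero_add, (isCoupling_smul_prod hab).lintegral_add hY.enorm hY.enorm]

lemma lintegral_W1_map_add_le {α E : Type*} [MeasurableSpace α] [NormedAddCommGroup E]
    [MeasurableSpace E] [OpensMeasurableSpace E] {ν : Measure α} [SFinite ν] {X : α → Ω → E}
    (hX : Measurable fun p : α × Ω => X p.1 p.2) (lam : Measure Ω) {a b : Measure Ω}
    [IsFiniteMeasure a] [IsFiniteMeasure b] (hab : a univ = b univ) (R : ℝ≥0∞) :
    ∫⁻ t, W1 ((lam + a).map (X t)) ((lam + b).map (X t)) ∂ν ≤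
      2 * R * (ν univ * a univ) + R⁻¹ * ((∫⁻ ω, ∫⁻ t, ‖X t ω‖ₑ ^ 2 ∂ν ∂(lam + a)) +
        ∫⁻ ω, ∫⁻ t, ‖X t ω‖ₑ ^ 2 ∂ν ∂(lam + b)) := by
  calc ∫⁻ t, W1 ((lam + a).map (X t)) ((lam + b).map (X t)) ∂ν
      ≤ ∫⁻ t, (∫⁻ ω, ‖X t ω‖ₑ ∂a + ∫⁻ ω, ‖X t ω‖ₑ ∂b) ∂ν :=
        lintegral_mono fun t => W1_map_add_le lam hab (hX.comp measurable_prodMk_left)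
    _ = (∫⁻ t, ∫⁻ ω, ‖X t ω‖ₑ ∂a ∂ν) + ∫⁻ t, ∫⁻ ω, ‖X t ω‖ₑ ∂b ∂ν :=
        lintegral_add_left hX.enorm.lintegral_prod_right' _
    _ ≤ (R * (ν univ * a univ) + R⁻¹ * ∫⁻ ω, ∫⁻ t, ‖X t ω‖ₑ ^ 2 ∂ν ∂a) +
          (R * (ν univ * b univ) + R⁻¹ * ∫⁻ ω, ∫⁻ t, ‖X t ω‖ₑ ^ 2 ∂ν ∂b) :=
        add_le_add (lintegral_lintegral_le_mul_add_inv_mul_lintegral_lintegral_sq hX.enorm R)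
          (lintegral_lintegral_le_mul_add_inv_mul_lintegral_lintegral_sq hX.enorm R)
    _ ≤ (R * (ν univ * a univ) + R⁻¹ * ∫⁻ ω, ∫⁻ t, ‖X t ω‖ₑ ^ 2 ∂ν ∂(lam + a)) +
          (R * (ν univ * a univ) + R⁻¹ * ∫⁻ ω, ∫⁻ t, ‖X t ω‖ₑ ^ 2 ∂ν ∂(lam + b)) := by
        rw [← hab]
        gcongr <;> exact Measure.le_add_left le_rfl
    _ = _ := by ring

lemma exists_add_eq_add_eq_measure_univ_le_tvDist
    (P P' : Measure Ω) [IsFiniteMeasure P] [IsFiniteMeasure P'] (h : P univ = P' univ) :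
    ∃ lam a b : Measure Ω, lam + a = P ∧ lam + b = P' ∧ a univ = b univ ∧
      a univ ≤ tvDist P P' := by
  obtain ⟨S, hS, hP'P, hPP'⟩ := hahn_decomposition P P'
  have hS_le : P'.restrict S ≤ P.restrict S := Measure.le_iff.2 fun A hA => by
    simpa only [Measure.restrict_apply hA] using hP'P _ (hA.inter hS) inter_subset_right
  have hSc_le : P.restrict Sᶜ ≤ P'.restrict Sᶜ := Measure.le_iff.2 fun A hA => by
    simpa only [Measure.restrict_apply hA] using hPP' _ (hA.inter hS.compl) inter_subset_right
  set lam := P'.restrict S + P.restrict Sᶜ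
  have hPa : lam + (P.restrict S - P'.restrict S) = P := by
    rw [add_comm, ← add_assoc, Measure.sub_add_cancel_of_le hS_le,
      Measure.restrict_add_restrict_compl hS]
  have hPb : lam + (P'.restrict Sᶜ - P.restrict Sᶜ) = P' := by
    rw [add_assoc, add_comm (P.restrict Sᶜ), Measure.sub_add_cancel_of_le hSc_le,
      Measure.restrict_add_restrict_compl hS]
  have hlam : lam univ ≠ ⊤ := ne_top_of_le_ne_top (measure_ne_top P univ)
    (hPa ▸ Measure.le_add_right le_rfl univ)
  refine ⟨lam, _, _, hPa, hPb, (ENNReal.add_right_inj hlam).1 ?_, ?_⟩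
  · rw [← Measure.add_apply, ← Measure.add_apply, hPa, hPb, h]
  · rw [Measure.sub_apply MeasurableSet.univ hS_le, Measure.restrict_apply_univ,
      Measure.restrict_apply_univ]
    exact le_iSup₂_of_le S hS (le_max_left _ _)

end PaperFormal

open PaperFormal in
theorem statement2_general
    {Ω : Type*} [MeasurableSpace Ω]
    {E : Type*} [NormedAddCommGroup E] [MeasurableSpace E] [BorelSpace E]
    (T : ℝ)
    (P P' : Measure Ω) [IsProbabilityMeasure P] [IsProbabilityMeasure P']
    (X : ℝ → Ω → E) (hX : Measurable fun p : ℝ × Ω => X p.1 p.2) :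
    ∫⁻ t in Set.Icc (0 : ℝ) T, W1 (P.map (X t)) (P'.map (X t)) ∂volume ≤
      (ENNReal.ofReal (2 * T) +
        (∫⁻ ω, ∫⁻ t in Set.Icc (0 : ℝ) T, (‖X t ω‖₊ : ENNReal) ^ 2 ∂volume ∂P) +
        (∫⁻ ω, ∫⁻ t in Set.Icc (0 : ℝ) T, (‖X t ω‖₊ : ENNReal) ^ 2 ∂volume ∂P')) *
      (tvDist P P') ^ (1 / 2 : ℝ) := by
  obtain ⟨lam, a, b, rfl, rfl, hab, ha_tv⟩ :=
    exists_add_eq_add_eq_measure_univ_le_tvDist P P' (by simp)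
  have : IsFiniteMeasure a := isFiniteMeasure_of_le (lam + a) (Measure.le_add_left le_rfl)
  have : IsFiniteMeasure b := isFiniteMeasure_of_le (lam + b) (Measure.le_add_left le_rfl)
  set s := tvDist (lam + a) (lam + b) ^ (1 / 2 : ℝ)
  have ha_s : s⁻¹ * a univ ≤ s := by
    rw [← ENNReal.div_eq_inv_mul]
    refine ENNReal.div_le_of_le_mul (ha_tv.trans_eq ?_)
    rw [← ENNReal.rpow_add_of_nonneg _ _ (by norm_num) (by norm_num)]
    norm_num
  -- No case split on `s = 0` is needed: then `a = 0`, and `s⁻¹ * a univ = ⊤ * 0 = 0`.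
  have hW1 := lintegral_W1_map_add_le (ν := volume.restrict (Icc 0 T)) hX lam hab s⁻¹
  simp only [enorm_eq_nnnorm, inv_inv, Measure.restrict_apply_univ, Real.volume_Icc,
    sub_zero] at hW1
  have hmass : 2 * s⁻¹ * (ENNReal.ofReal T * a univ) ≤ ENNReal.ofReal (2 * T) * s :=
    calc 2 * s⁻¹ * (ENNReal.ofReal T * a univ) = 2 * ENNReal.ofReal T * (s⁻¹ * a univ) := by ring
      _ ≤ 2 * ENNReal.ofReal T * s := by gcongr
      _ = ENNReal.ofReal (2 * T) * s := by rw [ENNReal.ofReal_mul zero_le_two, ENNReal.ofReal_ofNat]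
  exact (hW1.trans (add_le_add hmass le_rfl)).trans_eq (by ring)

open PaperFormal in
/-- quantitative TV–Wasserstein bound from Proposition 3.1.  For a jointly
measurable process `X` with finite `ℍ²`-norms under `P` and `P'`:
`∫₀ᵀ 𝒲₁(P∘X_t⁻¹, P'∘X_t⁻¹) dt ≤ (2T + ‖X‖²_{ℍ²(P)} + ‖X‖²_{ℍ²(P')})·‖P−P'‖_TV^{1/2}`. -/
theorem statement2
    {Ω : Type*} [MeasurableSpace Ω]
    {E : Type*} [NormedAddCommGroup E] [NormedSpace ℝ E] [CompleteSpace E]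
    [TopologicalSpace.SeparableSpace E] [MeasurableSpace E] [BorelSpace E]
    (T : ℝ) (hT : 0 < T)
    (P P' : Measure Ω) [IsProbabilityMeasure P] [IsProbabilityMeasure P']
    (X : ℝ → Ω → E) (hX : Measurable fun p : ℝ × Ω => X p.1 p.2)
    (hP : ∫⁻ ω, ∫⁻ t in Set.Icc (0 : ℝ) T, (‖X t ω‖₊ : ENNReal) ^ 2 ∂volume ∂P < ⊤)
    (hP' : ∫⁻ ω, ∫⁻ t in Set.Icc (0 : ℝ) T, (‖X t ω‖₊ : ENNReal) ^ 2 ∂volume ∂P' < ⊤) :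
    ∫⁻ t in Set.Icc (0 : ℝ) T, W1 (P.map (X t)) (P'.map (X t)) ∂volume ≤
      (ENNReal.ofReal (2 * T) +
        (∫⁻ ω, ∫⁻ t in Set.Icc (0 : ℝ) T, (‖X t ω‖₊ : ENNReal) ^ 2 ∂volume ∂P) +
        (∫⁻ ω, ∫⁻ t in Set.Icc (0 : ℝ) T, (‖X t ω‖₊ : ENNReal) ^ 2 ∂volume ∂P')) *
      (tvDist P P') ^ (1 / 2 : ℝ) :=
  statement2_general T P P' X hX
end
end

section
/- Let E be a separable Banach space, d ≥ 1, T > 0, I an index set, and for each i ∈ I let t ↦ q_t^i be a Borel map from [0,T] to 𝒫₁(E × ℝ^d) with marginals q_t^{i,x} on E and q_t^{i,z} on ℝ^d. Assume there exist δ₁, C₁ > 0 and a Borel probability measure 𝔮 on E with all moments finite such that q_t^{i,x} ≪ 𝔮 and ∫_E ( dq_t^{i,x}/d𝔮 )^{1+δ₁} d𝔮 ≤ C₁ for all i ∈ I and t ∈ [0,T], and there exist δ₂, C₂ > 0 with sup_{i∈I} ∫₀ᵀ ∫_{ℝ^d} |w|^{1+δ₂} q_t^{i,z}(dw) dt ≤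 C₂. Then there exists a constant C > 0, depending only on T, δ₁, δ₂, C₁, C₂ and the moments of 𝔮, such that for all K > 0, sup_{i∈I} ∫₀ᵀ M₁(q_t^i) · 1_{\{M₁(q_t^i) > K\}} dt ≤ C · K^{-δ₂}. In particular, the family of integrable Young measures { δ_{q_t^i}(dq) dt }_{i∈I} is uniformly integrable. -/
open MeasureTheory Filter Topology

noncomputable section

/-!
The first moment of `q_t` is the sum of the first moments of its two marginals. Hölder's
inequality against `𝔮` bounds the `x`-part by a constant `A`, uniformly in `i` and `t`. By Jensen,
the `z`-part `Z` satisfies `∫₀ᵀ Z ^ (1 + δ₂) ≤ C₂`. For `K ≥ 2 (A + 1)` the set `{M₁ > K}` lies in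
`{Z > K / 2}`, where `M₁ ≤ 2 Z ≤ 2 (K / 2) ^ (-δ₂) Z ^ (1 + δ₂)`; for smaller `K` the whole
integral `∫₀ᵀ M₁` is bounded by `(A + 1) T + C₂`.
-/

open PaperFormal Set
open scoped ENNReal

namespace ENNReal

theorem le_rpow_one_add_mul_rpow_neg {z L : ℝ≥0∞} {δ : ℝ} (hδ : 0 ≤ δ) (hL₀ : L ≠ 0)
    (hL : L ≠ ∞) (hLz : L ≤ z) : z ≤ z ^ (1 + δ) * L ^ (-δ) := by
  have hLL : L ^ δ * L ^ (-δ) = 1 := by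
    rw [← ENNReal.rpow_add _ _ hL₀ hL, add_neg_cancel, ENNReal.rpow_zero]
  calc z = z * (L ^ δ * L ^ (-δ)) := by rw [hLL, mul_one]
    _ ≤ z * (z ^ δ * L ^ (-δ)) := by gcongr
    _ = z ^ (1 + δ) * L ^ (-δ) := by
      rw [ENNReal.rpow_add_of_nonneg _ _ zero_le_one hδ, ENNReal.rpow_one, mul_assoc]

theorem le_one_add_rpow_one_add (z : ℝ≥0∞) {δ : ℝ} (hδ : 0 ≤ δ) : z ≤ 1 + z ^ (1 + δ) := by
  rcases le_total z 1 with hz | hz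
  · exact hz.trans le_self_add
  · calc z = z ^ (1 : ℝ) := (ENNReal.rpow_one z).symm
      _ ≤ z ^ (1 + δ) := ENNReal.rpow_le_rpow_of_exponent_le hz (by linarith)
      _ ≤ 1 + z ^ (1 + δ) := le_add_self

end ENNReal

namespace MeasureTheory

variable {ι α : Type*} [MeasurableSpace α] {μ : Measure α} {s : Set α} {δ : ℝ}

theorem rpow_lintegral_le_lintegral_rpow [IsProbabilityMeasure μ] {f : α → ℝ≥0∞}
    (hf : Measurable f) {p : ℝ} (hp : 1 ≤ p) :
    (∫⁻ a, f a ∂μ) ^ p ≤ ∫⁻ a, f a ^ p ∂μ := by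
  have h := eLpNorm'_le_eLpNorm'_of_exponent_le one_pos hp μ hf.aestronglyMeasurable
  simp only [eLpNorm'_eq_lintegral_enorm, enorm_eq_self, ENNReal.rpow_one, div_one] at h
  rwa [← ENNReal.rpow_le_rpow_iff (by linarith : 0 < p), ← ENNReal.rpow_mul,
    one_div_mul_cancel (by linarith), ENNReal.rpow_one] at h

theorem lintegral_le_Lp_rnDeriv_mul_Lq {ν : Measure α} [μ.HaveLebesgueDecomposition ν]
    (hμν : μ ≪ ν) {p q : ℝ} (hpq : p.HolderConjugate q) {f : α → ℝ≥0∞} (hf : AEMeasurable f ν) :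
    ∫⁻ a, f a ∂μ ≤
      (∫⁻ a, μ.rnDeriv ν a ^ p ∂ν) ^ (1 / p) * (∫⁻ a, f a ^ q ∂ν) ^ (1 / q) := by
  rw [← lintegral_rnDeriv_mul hμν hf]
  exact ENNReal.lintegral_mul_le_Lp_mul_Lq ν hpq (Measure.measurable_rnDeriv μ ν).aemeasurable hf

theorem setLIntegral_inter_lt_le_rpow_neg_mul {Z : α → ℝ≥0∞} (hZ : Measurable Z) (hδ : 0 ≤ δ)
    {L : ℝ≥0∞} (hL₀ : L ≠ 0) (hL : L ≠ ∞) :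
    ∫⁻ t in s ∩ {t | L < Z t}, Z t ∂μ ≤ L ^ (-δ) * ∫⁻ t in s, Z t ^ (1 + δ) ∂μ := by
  calc ∫⁻ t in s ∩ {t | L < Z t}, Z t ∂μ
      ≤ ∫⁻ t in s ∩ {t | L < Z t}, Z t ^ (1 + δ) * L ^ (-δ) ∂μ :=
        setLIntegral_mono ((hZ.pow_const _).mul_const _) fun t ht =>
          ENNReal.le_rpow_one_add_mul_rpow_neg hδ hL₀ hL ht.2.le
    _ ≤ ∫⁻ t in s, Z t ^ (1 + δ) * L ^ (-δ) ∂μ := lintegral_mono_set inter_subset_left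
    _ = L ^ (-δ) * ∫⁻ t in s, Z t ^ (1 + δ) ∂μ := by
      rw [lintegral_mul_const _ (hZ.pow_const _), mul_comm]

theorem setLIntegral_le_of_le_add_rpow {M Z : α → ℝ≥0∞} (hZ : Measurable Z) (hδ : 0 ≤ δ)
    {A : ℝ≥0∞} (hMZ : ∀ t ∈ s, M t ≤ A + Z t) :
    ∫⁻ t in s, M t ∂μ ≤ (A + 1) * μ s + ∫⁻ t in s, Z t ^ (1 + δ) ∂μ := by
  calc ∫⁻ t in s, M t ∂μ ≤ ∫⁻ t in s, (A + 1) + Z t ^ (1 + δ) ∂μ :=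
        setLIntegral_mono (measurable_const.add (hZ.pow_const _)) fun t ht =>
          (hMZ t ht).trans <| by
            rw [add_assoc]; gcongr; exact ENNReal.le_one_add_rpow_one_add _ hδ
    _ = (A + 1) * μ s + ∫⁻ t in s, Z t ^ (1 + δ) ∂μ := by
      rw [lintegral_add_left measurable_const, setLIntegral_const]

/-- Once `A ≤ L`, the level set `{2L < M}` lies in `{L < Z}`, on which `M ≤ 2 Z`. -/
theorem setLIntegral_inter_two_mul_lt_le {M Z : α → ℝ≥0∞} (hZ : Measurable Z) (hδ : 0 ≤ δ)
    {A L : ℝ≥0∞} (hMZ : ∀ t ∈ s, M t ≤ A + Z t) (hAL : A ≤ L) (hL₀ : L ≠ 0) (hL : L ≠ ∞) :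
    ∫⁻ t in s ∩ {t | 2 * L < M t}, M t ∂μ ≤ 2 * L ^ (-δ) * ∫⁻ t in s, Z t ^ (1 + δ) ∂μ := by
  have hlevel : ∀ t ∈ s ∩ {t | 2 * L < M t}, L < Z t := fun t ⟨hts, hMt⟩ => by
    by_contra! hZt
    have := (hMZ t hts).trans (add_le_add hAL hZt)
    rw [← two_mul] at this
    exact this.not_gt hMt
  calc ∫⁻ t in s ∩ {t | 2 * L < M t}, M t ∂μ
      ≤ ∫⁻ t in s ∩ {t | 2 * L < M t}, 2 * Z t ∂μ :=
        setLIntegral_mono (hZ.const_mul _) fun t ht => by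
          rw [two_mul]
          exact (hMZ t ht.1).trans (by gcongr; exact hAL.trans (hlevel t ht).le)
    _ ≤ ∫⁻ t in s ∩ {t | L < Z t}, 2 * Z t ∂μ :=
        lintegral_mono_set fun t ht => ⟨ht.1, hlevel t ht⟩
    _ ≤ 2 * (L ^ (-δ) * ∫⁻ t in s, Z t ^ (1 + δ) ∂μ) := by
      rw [lintegral_const_mul _ hZ]
      gcongr
      exact setLIntegral_inter_lt_le_rpow_neg_mul hZ hδ hL₀ hL
    _ = 2 * L ^ (-δ) * ∫⁻ t in s, Z t ^ (1 + δ) ∂μ := (mul_assoc _ _ _).symm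

theorem exists_setLIntegral_inter_lt_le_rpow_neg (hμs : μ s ≠ ∞) {M Z : ι → α → ℝ≥0∞}
    (hZ : ∀ i, Measurable (Z i)) {A : ℝ≥0∞} (hA : A ≠ ∞) (hMZ : ∀ i, ∀ t ∈ s, M i t ≤ A + Z i t)
    (hδ : 0 < δ) {C₂ : ℝ} (hC₂ : 0 < C₂)
    (hZδ : ∀ i, ∫⁻ t in s, Z i t ^ (1 + δ) ∂μ ≤ ENNReal.ofReal C₂) :
    ∃ C : ℝ, 0 < C ∧ ∀ K : ℝ, 0 < K → ∀ i,
      ∫⁻ t in s ∩ {t | ENNReal.ofReal K < M i t}, M i t ∂μ ≤ ENNReal.ofReal (C * K ^ (-δ)) := by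
  set K₀ := 2 * (A.toReal + 1)
  set B := (A.toReal + 1) * (μ s).toReal + C₂
  -- below `K₀` the whole integral is at most `B`; above it, Markov's inequality at level `K / 2`
  refine ⟨max (B * K₀ ^ δ) (2 * 2 ^ δ * C₂), by positivity, fun K hK i => ?_⟩
  rcases le_or_gt K K₀ with hKK₀ | hK₀K
  · have hB : ENNReal.ofReal B = (A + 1) * μ s + ENNReal.ofReal C₂ := by
      rw [ENNReal.ofReal_add (by positivity) hC₂.le, ENNReal.ofReal_mul (by positivity),
        ENNReal.ofReal_add ENNReal.toReal_nonneg zero_le_one, ENNReal.ofReal_toReal hA,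
        ENNReal.ofReal_toReal hμs, ENNReal.ofReal_one]
    have hBK : B ≤ B * K₀ ^ δ * K ^ (-δ) := by
      rw [Real.rpow_neg hK.le, mul_assoc, ← div_eq_mul_inv, le_mul_iff_one_le_right (by positivity),
        one_le_div (by positivity)]
      gcongr
    calc ∫⁻ t in s ∩ {t | ENNReal.ofReal K < M i t}, M i t ∂μ
        ≤ ∫⁻ t in s, M i t ∂μ := lintegral_mono_set inter_subset_left
      _ ≤ (A + 1) * μ s + ENNReal.ofReal C₂ :=
        (setLIntegral_le_of_le_add_rpow (hZ i) hδ.le (hMZ i)).trans (by gcongr; exact hZδ i)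
      _ ≤ ENNReal.ofReal (max (B * K₀ ^ δ) (2 * 2 ^ δ * C₂) * K ^ (-δ)) := by
        rw [← hB]
        exact ENNReal.ofReal_le_ofReal <| hBK.trans <| by gcongr; exact le_max_left _ _
  · have hAL : A ≤ ENNReal.ofReal (K / 2) := by
      rw [← ENNReal.ofReal_toReal hA]
      exact ENNReal.ofReal_le_ofReal (by linarith)
    have hL₀ : ENNReal.ofReal (K / 2) ≠ 0 := by simpa using hK
    have hKL : ENNReal.ofReal K = 2 * ENNReal.ofReal (K / 2) := by
      rw [← ENNReal.ofReal_ofNat 2, ← ENNReal.ofReal_mul zero_le_two, mul_div_cancel₀ _ two_ne_zero]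
    have hpow : 2 * (K / 2) ^ (-δ) = 2 * 2 ^ δ * K ^ (-δ) := by
      rw [Real.div_rpow hK.le zero_le_two, Real.rpow_neg zero_le_two, div_inv_eq_mul]; ring
    calc ∫⁻ t in s ∩ {t | ENNReal.ofReal K < M i t}, M i t ∂μ
        ≤ 2 * ENNReal.ofReal (K / 2) ^ (-δ) * ∫⁻ t in s, Z i t ^ (1 + δ) ∂μ := by
          rw [hKL]
          exact setLIntegral_inter_two_mul_lt_le (hZ i) hδ.le (hMZ i) hAL hL₀ ENNReal.ofReal_ne_top
      _ ≤ ENNReal.ofReal (2 * (K / 2) ^ (-δ) * C₂) := by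
        rw [ENNReal.ofReal_mul (by positivity), ENNReal.ofReal_mul zero_le_two,
          ENNReal.ofReal_rpow_of_pos (by positivity), ENNReal.ofReal_ofNat]
        gcongr
        exact hZδ i
      _ ≤ ENNReal.ofReal (max (B * K₀ ^ δ) (2 * 2 ^ δ * C₂) * K ^ (-δ)) := by
        rw [hpow, mul_right_comm]
        exact ENNReal.ofReal_le_ofReal <| by gcongr; exact le_max_right _ _

end MeasureTheory

theorem tendsto_iSup_of_le_ofReal_rpow_neg {ι : Type*} {f : ℝ → ι → ℝ≥0∞} {C δ : ℝ}
    (hδ : 0 < δ) (hf : ∀ K : ℝ, 0 < K → ∀ i, f K i ≤ ENNReal.ofReal (C * K ^ (-δ))) :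
    Tendsto (fun K => ⨆ i, f K i) atTop (𝓝 0) := by
  have hbound : Tendsto (fun K : ℝ => ENNReal.ofReal (C * K ^ (-δ))) atTop (𝓝 0) := by
    simpa using ENNReal.tendsto_ofReal ((tendsto_rpow_neg_atTop hδ).const_mul C)
  refine tendsto_of_tendsto_of_tendsto_of_le_of_le' tendsto_const_nhds hbound
    (Eventually.of_forall fun K => zero_le) ?_
  filter_upwards [eventually_gt_atTop 0] with K hK
  exact iSup_le (hf K hK)

theorem PaperFormal.lintegral_sumCost_zero {E F : Type*} [NormedAddCommGroup E]
    [NormedAddCommGroup F] [MeasurableSpace E] [MeasurableSpace F] [OpensMeasurableSpace E]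
    (μ : Measure (E × F)) :
    ∫⁻ u, sumCost ((0, 0) : E × F) u ∂μ = ∫⁻ u, ‖u.1‖ₑ ∂μ + ∫⁻ u, ‖u.2‖ₑ ∂μ := by
  simp only [sumCost, edist_zero_left]
  exact lintegral_add_left (measurable_fst.enorm) _

open PaperFormal in
theorem statement10_general
    {E : Type*} [NormedAddCommGroup E] [MeasurableSpace E] [BorelSpace E]
    {I : Type*} (d : ℕ) (T : ℝ)
    (q : I → ℝ → Measure (E × EuclideanSpace ℝ (Fin d)))
    (hmeas : ∀ i, Measurable (q i))
    (hP1 : ∀ i, ∀ t ∈ Set.Icc (0 : ℝ) T,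
      q i t ∈ P1 (sumCost) ((0, 0) : E × EuclideanSpace ℝ (Fin d)))
    (𝔮 : Measure E) [IsProbabilityMeasure 𝔮]
    (hmom : ∀ p : ℝ, 1 ≤ p → ∫⁻ x, (‖x‖₊ : ENNReal) ^ p ∂𝔮 < ⊤)
    (δ₁ C₁ : ℝ) (hδ₁ : 0 < δ₁)
    (habs : ∀ i, ∀ t ∈ Set.Icc (0 : ℝ) T, (q i t).map Prod.fst ≪ 𝔮)
    (hdens : ∀ i, ∀ t ∈ Set.Icc (0 : ℝ) T,
      ∫⁻ x, (((q i t).map Prod.fst).rnDeriv 𝔮 x) ^ (1 + δ₁) ∂𝔮 ≤ ENNReal.ofReal C₁)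
    (δ₂ C₂ : ℝ) (hδ₂ : 0 < δ₂) (hC₂ : 0 < C₂)
    (hz : ∀ i, ∫⁻ t in Set.Icc (0 : ℝ) T,
      (∫⁻ w, (‖w‖₊ : ENNReal) ^ (1 + δ₂) ∂((q i t).map Prod.snd)) ∂volume ≤
        ENNReal.ofReal C₂) :
    ∃ C : ℝ, 0 < C ∧
      (∀ K : ℝ, 0 < K → ∀ i,
        ∫⁻ t in Set.Icc (0 : ℝ) T ∩
            {t | ENNReal.ofReal K <
              ∫⁻ u, sumCost ((0, 0) : E × EuclideanSpace ℝ (Fin d)) u ∂(q i t)},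
          (∫⁻ u, sumCost ((0, 0) : E × EuclideanSpace ℝ (Fin d)) u ∂(q i t)) ∂volume ≤
        ENNReal.ofReal (C * K ^ (-δ₂))) ∧
      Tendsto (fun K : ℝ => ⨆ i,
        ∫⁻ t in Set.Icc (0 : ℝ) T ∩
            {t | ENNReal.ofReal K <
              ∫⁻ u, sumCost ((0, 0) : E × EuclideanSpace ℝ (Fin d)) u ∂(q i t)},
          (∫⁻ u, sumCost ((0, 0) : E × EuclideanSpace ℝ (Fin d)) u ∂(q i t)) ∂volume)
        atTop (𝓝 0) := by
  simp only [← enorm_eq_nnnorm] at hmom hz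
  have hprob (i t) (ht : t ∈ Icc 0 T) : IsProbabilityMeasure (q i t) := (hP1 i t ht).1
  have hpq : (1 + δ₁).HolderConjugate (1 + δ₁).conjExponent := .conjExponent (by linarith)
  set A := ENNReal.ofReal C₁ ^ (1 / (1 + δ₁)) *
    (∫⁻ x, ‖x‖ₑ ^ (1 + δ₁).conjExponent ∂𝔮) ^ (1 / (1 + δ₁).conjExponent)
  have hA : A ≠ ∞ := ENNReal.mul_ne_top
    (ENNReal.rpow_ne_top_of_nonneg hpq.one_div_nonneg ENNReal.ofReal_ne_top)
    (ENNReal.rpow_ne_top_of_nonneg hpq.symm.one_div_nonneg (hmom _ hpq.symm.lt.le).ne)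
  have hX (i t) (ht : t ∈ Icc 0 T) : ∫⁻ u, ‖u.1‖ₑ ∂(q i t) ≤ A := by
    have := hprob i t ht
    rw [← lintegral_map measurable_enorm measurable_fst]
    refine (lintegral_le_Lp_rnDeriv_mul_Lq (habs i t ht) hpq measurable_enorm.aemeasurable).trans ?_
    dsimp only [A]
    gcongr
    exact hdens i t ht
  have hZδ (i) : ∫⁻ t in Icc 0 T, (∫⁻ u, ‖u.2‖ₑ ∂(q i t)) ^ (1 + δ₂) ≤ ENNReal.ofReal C₂ := by
    refine le_trans (setLIntegral_mono' measurableSet_Icc fun t ht => ?_) (hz i)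
    have := hprob i t ht
    rw [lintegral_map (measurable_enorm.pow_const _) measurable_snd]
    exact rpow_lintegral_le_lintegral_rpow measurable_snd.enorm (by linarith)
  obtain ⟨C, hC, htail⟩ := exists_setLIntegral_inter_lt_le_rpow_neg (by simp)
    (Z := fun i t => ∫⁻ u, ‖u.2‖ₑ ∂(q i t))
    (fun i => (Measure.measurable_lintegral measurable_snd.enorm).comp (hmeas i)) hA
    (fun i t ht => (lintegral_sumCost_zero _).trans_le (by gcongr; exact hX i t ht)) hδ₂ hC₂ hZδ
  exact ⟨C, hC, htail, tendsto_iSup_of_le_ofReal_rpow_neg hδ₂ htail⟩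

open PaperFormal in
/-- uniform integrability estimate, Step 3 of the proof of Theorem 4.3.
Under the density bound on the `x`-marginals and the `(1+δ₂)`-moment bound on the
`z`-marginals, there is a constant `C > 0` with
`sup_i ∫₀ᵀ M₁(q_t^i)·1_{M₁(q_t^i)>K} dt ≤ C·K^{-δ₂}` for all `K > 0`; in particular the
family of Dirac-type Young measures is uniformly integrable. -/
theorem statement10
    {E : Type*} [NormedAddCommGroup E] [NormedSpace ℝ E] [CompleteSpace E]
    [TopologicalSpace.SeparableSpace E] [MeasurableSpace E] [BorelSpace E]
    {I : Type*} (d : ℕ) (hd : 1 ≤ d) (T : ℝ) (hT : 0 < T)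
    (q : I → ℝ → Measure (E × EuclideanSpace ℝ (Fin d)))
    (hmeas : ∀ i, Measurable (q i))
    (hP1 : ∀ i, ∀ t ∈ Set.Icc (0 : ℝ) T,
      q i t ∈ P1 (sumCost) ((0, 0) : E × EuclideanSpace ℝ (Fin d)))
    (𝔮 : Measure E) [IsProbabilityMeasure 𝔮]
    (hmom : ∀ p : ℝ, 1 ≤ p → ∫⁻ x, (‖x‖₊ : ENNReal) ^ p ∂𝔮 < ⊤)
    (δ₁ C₁ : ℝ) (hδ₁ : 0 < δ₁) (hC₁ : 0 < C₁)
    (habs : ∀ i, ∀ t ∈ Set.Icc (0 : ℝ) T, (q i t).map Prod.fst ≪ 𝔮)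
    (hdens : ∀ i, ∀ t ∈ Set.Icc (0 : ℝ) T,
      ∫⁻ x, (((q i t).map Prod.fst).rnDeriv 𝔮 x) ^ (1 + δ₁) ∂𝔮 ≤ ENNReal.ofReal C₁)
    (δ₂ C₂ : ℝ) (hδ₂ : 0 < δ₂) (hC₂ : 0 < C₂)
    (hz : ∀ i, ∫⁻ t in Set.Icc (0 : ℝ) T,
      (∫⁻ w, (‖w‖₊ : ENNReal) ^ (1 + δ₂) ∂((q i t).map Prod.snd)) ∂volume ≤
        ENNReal.ofReal C₂) :
    ∃ C : ℝ, 0 < C ∧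
      (∀ K : ℝ, 0 < K → ∀ i,
        ∫⁻ t in Set.Icc (0 : ℝ) T ∩
            {t | ENNReal.ofReal K <
              ∫⁻ u, sumCost ((0, 0) : E × EuclideanSpace ℝ (Fin d)) u ∂(q i t)},
          (∫⁻ u, sumCost ((0, 0) : E × EuclideanSpace ℝ (Fin d)) u ∂(q i t)) ∂volume ≤
        ENNReal.ofReal (C * K ^ (-δ₂))) ∧
      Tendsto (fun K : ℝ => ⨆ i,
        ∫⁻ t in Set.Icc (0 : ℝ) T ∩
            {t | ENNReal.ofReal K <
              ∫⁻ u, sumCost ((0, 0) : E × EuclideanSpace ℝ (Fin d)) u ∂(q i t)},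
          (∫⁻ u, sumCost ((0, 0) : E × EuclideanSpace ℝ (Fin d)) u ∂(q i t)) ∂volume)
        atTop (𝓝 0) :=
  statement10_general d T q hmeas hP1 𝔮 hmom δ₁ C₁ hδ₁ habs hdens δ₂ C₂ hδ₂ hC₂ hz
end
end
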